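/- arXiv:1809.11115 — 3 statements merged into one kernel-verified Lean document; each statement's English description precedes it below -/
import Mathlib

section
/- The unique solution H to the equation L H = e e^T - n I with zero diagonal entries is given by H_{ij} = n (e_j - e_i)^T L^+ e_j, where L^+ is the Moore–Penrose pseudo-inverse of L. -/
/-!
Since `L` is symmetric and `L e = 0`, the symmetric matrix `L L⁺` also kills `e`, so
`L H = L L⁺ L H = L L⁺ (e eᵀ - n I) = -n L L⁺`. The matrix `H'` with `H'ᵢⱼ = n (L⁺ⱼⱼ - L⁺ᵢⱼ)`
solves the same equation because `L e = 0`. From `2 xᵀ L x = ∑ᵢⱼ Aᵢⱼ (xᵢ - xⱼ)²` the kernel of `L`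
consists of the vectors constant along the edges, hence of the constant vectors by connectivity.
So every column of `H - H'` is constant, and it vanishes on the diagonal.
-/

open Matrix

/-- `P` is the Moore–Penrose pseudo-inverse of `M`. -/
def IsMoorePenroseInverse {n : ℕ} (M P : Matrix (Fin n) (Fin n) ℝ) : Prop :=
  M * P * M = M ∧ P * M * P = P ∧ (M * P)ᵀ = M * P ∧ (P * M)ᵀ = P * M

variable {ι R : Type*} [Fintype ι]

section Laplacian

variable [DecidableEq ι]

def weightedLaplacian [Ring R] (A : Matrix ι ι R) : Matrix ι ι R :=
  diagonal (A *ᵥ 1) - A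

lemma weightedLaplacian_mulVec_apply [CommRing R] (A : Matrix ι ι R) (x : ι → R) (i : ι) :
    (weightedLaplacian A *ᵥ x) i = ∑ j, A i j * (x i - x j) := by
  rw [weightedLaplacian, sub_mulVec, Pi.sub_apply, mulVec_diagonal]
  simp only [mulVec, dotProduct, Pi.one_apply, mul_one, Finset.sum_mul, mul_sub,
    Finset.sum_sub_distrib]

lemma weightedLaplacian_mulVec_one [CommRing R] (A : Matrix ι ι R) :
    weightedLaplacian A *ᵥ 1 = 0 := by
  ext i
  simp [weightedLaplacian_mulVec_apply]

lemma isSymm_weightedLaplacian [Ring R] {A : Matrix ι ι R} (hA : A.IsSymm) :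
    (weightedLaplacian A).IsSymm := by
  rw [weightedLaplacian, IsSymm, transpose_sub, diagonal_transpose, hA]

lemma two_mul_dotProduct_weightedLaplacian_mulVec [CommRing R] {A : Matrix ι ι R}
    (hA : A.IsSymm) (x : ι → R) :
    2 * (x ⬝ᵥ (weightedLaplacian A *ᵥ x)) = ∑ i, ∑ j, A i j * (x i - x j) ^ 2 := by
  have hform : x ⬝ᵥ (weightedLaplacian A *ᵥ x) = ∑ i, ∑ j, A i j * (x i * (x i - x j)) := by
    simp only [dotProduct, weightedLaplacian_mulVec_apply, Finset.mul_sum]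
    exact Finset.sum_congr rfl fun i _ => Finset.sum_congr rfl fun j _ => by ring
  have hswap : ∑ i, ∑ j, A i j * (x i * (x i - x j)) = ∑ i, ∑ j, A i j * (x j * (x j - x i)) := by
    rw [Finset.sum_comm]
    exact Finset.sum_congr rfl fun i _ => Finset.sum_congr rfl fun j _ => by rw [hA.apply i j]
  rw [two_mul, hform]
  nth_rw 2 [hswap]
  rw [← Finset.sum_add_distrib]
  refine Finset.sum_congr rfl fun i _ => ?_
  rw [← Finset.sum_add_distrib]
  exact Finset.sum_congr rfl fun j _ => by ring

lemma eq_of_weightedLaplacian_mulVec_eq_zero_of_pos [CommRing R] [LinearOrder R]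
    [IsStrictOrderedRing R] {A : Matrix ι ι R} (hA : A.IsSymm)
    (hnonneg : ∀ i j, 0 ≤ A i j) {x : ι → R} (hx : weightedLaplacian A *ᵥ x = 0) {a b : ι}
    (hab : 0 < A a b) : x a = x b := by
  have hsum := two_mul_dotProduct_weightedLaplacian_mulVec hA x
  rw [hx, dotProduct_zero, mul_zero, eq_comm] at hsum
  have hterm_nonneg (i j : ι) : 0 ≤ A i j * (x i - x j) ^ 2 :=
    mul_nonneg (hnonneg i j) (sq_nonneg _)
  have hrow := (Finset.sum_eq_zero_iff_of_nonneg fun i _ =>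
    Finset.sum_nonneg fun j _ => hterm_nonneg i j).mp hsum a (Finset.mem_univ a)
  have hterm : A a b * (x a - x b) ^ 2 = 0 :=
    (Finset.sum_eq_zero_iff_of_nonneg fun j _ => hterm_nonneg a j).mp hrow b (Finset.mem_univ b)
  rwa [mul_eq_zero, or_iff_right hab.ne', pow_eq_zero_iff two_ne_zero, sub_eq_zero] at hterm

lemma eq_of_weightedLaplacian_mulVec_eq_zero [CommRing R] [LinearOrder R]
    [IsStrictOrderedRing R] {A : Matrix ι ι R} (hA : A.IsSymm)
    (hnonneg : ∀ i j, 0 ≤ A i j)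
    (hconn : ∀ i j : ι, Relation.ReflTransGen (fun a b => 0 < A a b) i j)
    {x : ι → R} (hx : weightedLaplacian A *ᵥ x = 0) (a b : ι) : x a = x b := by
  have := Relation.ReflTransGen.lift x (p := Eq)
    (fun _ _ => eq_of_weightedLaplacian_mulVec_eq_zero_of_pos hA hnonneg hx) _ _ (hconn a b)
  rwa [Relation.reflTransGen_eq_self] at this

end Laplacian

lemma eq_of_mul_eq_mul_of_diag_eq_zero [DecidableEq ι] [Ring R] {M X Y : Matrix ι ι R}
    (hker : ∀ x, M *ᵥ x = 0 → ∀ a b, x a = x b) (h : M * X = M * Y)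
    (hX : ∀ i, X i i = 0) (hY : ∀ i, Y i i = 0) : X = Y := by
  ext i j
  have hcol : M *ᵥ ((X - Y) *ᵥ Pi.single j 1) = 0 := by
    rw [mulVec_mulVec, mul_sub, h, sub_self, zero_mulVec]
  have := hker _ hcol i j
  rwa [mulVec_single_one, col_apply, col_apply, Matrix.sub_apply, Matrix.sub_apply, hX, hY,
    sub_zero, sub_eq_zero] at this

lemma mul_vecMulVec_one_diag_sub_self [Ring R] {M : Matrix ι ι R} (hM : M *ᵥ 1 = 0)
    (P : Matrix ι ι R) : M * (vecMulVec 1 P.diag - P) = -(M * P) := by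
  rw [mul_sub, mul_vecMulVec, hM, zero_vecMulVec, zero_sub]

lemma sub_single_dotProduct_mulVec_single [DecidableEq ι] [Ring R] (P : Matrix ι ι R)
    (i j : ι) : (Pi.single j 1 - Pi.single i 1) ⬝ᵥ P *ᵥ Pi.single j 1 = P j j - P i j := by
  rw [mulVec_single_one, sub_dotProduct, single_dotProduct, single_dotProduct, one_mul, one_mul,
    col_apply, col_apply]

namespace IsMoorePenroseInverse

variable {n : ℕ} {M P : Matrix (Fin n) (Fin n) ℝ}

lemma mul_mulVec_eq_zero (hP : IsMoorePenroseInverse M P) (hM : M.IsSymm) {v : Fin n → ℝ}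
    (hv : M *ᵥ v = 0) : (M * P) *ᵥ v = 0 := by
  rw [← hP.2.2.1, transpose_mul, ← mulVec_mulVec, hM.eq, hv, mulVec_zero]

lemma mul_eq_neg_smul_mul (hP : IsMoorePenroseInverse M P) (hM : M.IsSymm) (hM1 : M *ᵥ 1 = 0)
    {X : Matrix (Fin n) (Fin n) ℝ} {c : ℝ} (hX : M * X = vecMulVec 1 1 - c • 1) :
    M * X = -c • (M * P) :=
  calc M * X = M * P * (M * X) := by rw [← mul_assoc, hP.1]
    _ = -c • (M * P) := by
      rw [hX, mul_sub, mul_vecMulVec, hP.mul_mulVec_eq_zero hM hM1, zero_vecMulVec,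
        Matrix.mul_smul, mul_one, zero_sub, neg_smul]

end IsMoorePenroseInverse

theorem hitting_times_formula_general
    (n : ℕ) (A : Matrix (Fin n) (Fin n) ℝ)
    (hsymm : A.IsSymm) (hnonneg : ∀ i j, 0 ≤ A i j)
    (hconn : ∀ i j : Fin n, Relation.ReflTransGen (fun a b => 0 < A a b) i j)
    (L : Matrix (Fin n) (Fin n) ℝ)
    (hL : L = Matrix.diagonal (A.mulVec 1) - A)
    (Lp : Matrix (Fin n) (Fin n) ℝ) (hLp : IsMoorePenroseInverse L Lp)
    (H : Matrix (Fin n) (Fin n) ℝ)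
    (hHdiag : ∀ i, H i i = 0)
    (hH : L * H = Matrix.vecMulVec (fun _ => (1 : ℝ)) (fun _ => (1 : ℝ)) - (n : ℝ) • 1) :
    ∀ i j, H i j = (n : ℝ) * ((Pi.single j 1 - Pi.single i 1) ⬝ᵥ Lp.mulVec (Pi.single j 1)) := by
  obtain rfl : L = weightedLaplacian A := hL
  have hH_eq : H = (n : ℝ) • (vecMulVec 1 Lp.diag - Lp) := by
    refine eq_of_mul_eq_mul_of_diag_eq_zero
      (fun _ hx => eq_of_weightedLaplacian_mulVec_eq_zero hsymm hnonneg hconn hx) ?_ hHdiag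
      (by simp)
    rw [hLp.mul_eq_neg_smul_mul (isSymm_weightedLaplacian hsymm) (weightedLaplacian_mulVec_one A)
      hH, Matrix.mul_smul, mul_vecMulVec_one_diag_sub_self (weightedLaplacian_mulVec_one A),
      smul_neg, neg_smul]
  intro i j
  rw [hH_eq, sub_single_dotProduct_mulVec_single]
  simp [mul_sub]

theorem hitting_times_formula
    (n : ℕ) (A : Matrix (Fin n) (Fin n) ℝ)
    (hsymm : A.IsSymm) (hnonneg : ∀ i j, 0 ≤ A i j) (hdiag : ∀ i, A i i = 0)
    (hconn : ∀ i j : Fin n, Relation.ReflTransGen (fun a b => 0 < A a b) i j)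
    (L : Matrix (Fin n) (Fin n) ℝ)
    (hL : L = Matrix.diagonal (A.mulVec 1) - A)
    (Lp : Matrix (Fin n) (Fin n) ℝ) (hLp : IsMoorePenroseInverse L Lp)
    (H : Matrix (Fin n) (Fin n) ℝ)
    (hHdiag : ∀ i, H i i = 0)
    (hH : L * H = Matrix.vecMulVec (fun _ => (1 : ℝ)) (fun _ => (1 : ℝ)) - (n : ℝ) • 1) :
    ∀ i j, H i j = (n : ℝ) * ((Pi.single j 1 - Pi.single i 1) ⬝ᵥ Lp.mulVec (Pi.single j 1)) :=
  hitting_times_formula_general n A hsymm hnonneg hconn L hL Lp hLp H hHdiag hH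
end

section
/- For the weighted random walk with generator -W^{-1}L, the matrix H of mean hitting times satisfies L H = w e^T - |w| I, where |w| = \sum_i w_i. -/
/-!
Multiplying the first-step equation `H i j = w i / d i + ∑ k, A i k / d i * H k j` by `d i` shows
that every off-diagonal entry of `L H` in row `i` equals `w i`. Since `A` is symmetric, the
Laplacian `L` has zero column sums as well as zero row sums, so every column of `L H` sums to
zero; this forces the diagonal entry `(L H) j j = w j - |w|`, whatever the values `H j j`.
-/

open Matrix

namespace Matrix

variable {ι R : Type*} [Fintype ι] [DecidableEq ι]

theorem one_vecMul_diagonal_mulVec_one_sub [NonAssocRing R] {A : Matrix ι ι R} (hA : A.IsSymm) :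
    1 ᵥ* (diagonal (A *ᵥ 1) - A) = 0 := by
  ext j
  rw [vecMul_sub, Pi.sub_apply, vecMul_diagonal, Pi.zero_apply, sub_eq_zero]
  simp [mulVec, vecMul, dotProduct, hA.apply j]

theorem diagonal_sub_mul_apply_of_first_step [Field R] {d w : ι → R} {A H : Matrix ι ι R}
    {i j : ι} (hdi : d i ≠ 0) (hH : H i j = w i / d i + ∑ k, A i k / d i * H k j) :
    ((diagonal d - A) * H) i j = w i := by
  rw [sub_mul, sub_apply, diagonal_mul, mul_apply, hH, mul_add, mul_div_cancel₀ _ hdi,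
    Finset.mul_sum]
  simp only [div_mul_eq_mul_div, mul_div_cancel₀ _ hdi, add_sub_cancel_right]

theorem eq_vecMulVec_sub_smul_one_of_one_vecMul_eq_zero [Ring R] {M : Matrix ι ι R}
    {w : ι → R} (hcol : 1 ᵥ* M = 0) (hoff : ∀ i j, i ≠ j → M i j = w i) :
    M = vecMulVec w (fun _ => 1) - (∑ i, w i) • 1 := by
  ext i j
  rcases eq_or_ne i j with rfl | hij
  · have hentry : ∀ a, M a i = w a + if a = i then M i i - w i else 0 := by
      intro a
      split_ifs with ha
      · rw [ha, add_sub_cancel]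
      · rw [hoff a i ha, add_zero]
    have hsum : ∑ a, M a i = 0 := by simpa [vecMul, dotProduct] using congrFun hcol i
    rw [Finset.sum_congr rfl fun a _ => hentry a] at hsum
    simp only [Finset.sum_add_distrib, Finset.sum_ite_eq', Finset.mem_univ,
      if_true] at hsum
    rw [Matrix.sub_apply, vecMulVec_apply, Matrix.smul_apply, one_apply_eq, mul_one, smul_eq_mul,
      mul_one, ← sub_eq_zero, ← hsum]
    abel
  · simp [vecMulVec_apply, hoff i j hij, hij]

end Matrix

theorem weighted_hitting_times_matrix_equation_general
    (n : ℕ) (A : Matrix (Fin n) (Fin n) ℝ)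
    (hsymm : A.IsSymm)
    (d : Fin n → ℝ) (hd : d = A.mulVec 1) (hdpos : ∀ i, 0 < d i)
    (w : Fin n → ℝ)
    (L : Matrix (Fin n) (Fin n) ℝ)
    (hL : L = Matrix.diagonal d - A)
    (H : Matrix (Fin n) (Fin n) ℝ)
    (hHstep : ∀ i j, i ≠ j → H i j = w i / d i + ∑ k, (A i k / d i) * H k j) :
    L * H = Matrix.vecMulVec w (fun _ => (1 : ℝ)) - (∑ i, w i) • 1 := by
  subst hL
  refine eq_vecMulVec_sub_smul_one_of_one_vecMul_eq_zero ?_ fun i j hij =>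
    diagonal_sub_mul_apply_of_first_step (hdpos i).ne' (hHstep i j hij)
  rw [← vecMul_vecMul, hd, one_vecMul_diagonal_mulVec_one_sub hsymm, zero_vecMul]

/-- The mean hitting times of the weighted random walk with generator `-W⁻¹L`
(rate `A i j / w i` from `i` to `j`), characterized by the first-step equations,
satisfy `L H = w eᵀ - |w| I`. -/
theorem weighted_hitting_times_matrix_equation
    (n : ℕ) (A : Matrix (Fin n) (Fin n) ℝ)
    (hsymm : A.IsSymm) (hnonneg : ∀ i j, 0 ≤ A i j) (hdiag : ∀ i, A i i = 0)
    (hconn : ∀ i j : Fin n, Relation.ReflTransGen (fun a b => 0 < A a b) i j)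
    (d : Fin n → ℝ) (hd : d = A.mulVec 1) (hdpos : ∀ i, 0 < d i)
    (w : Fin n → ℝ) (hw : ∀ i, 0 < w i)
    (L : Matrix (Fin n) (Fin n) ℝ)
    (hL : L = Matrix.diagonal d - A)
    (H : Matrix (Fin n) (Fin n) ℝ)
    (hHdiag : ∀ i, H i i = 0)
    (hHstep : ∀ i j, i ≠ j → H i j = w i / d i + ∑ k, (A i k / d i) * H k j) :
    L * H = Matrix.vecMulVec w (fun _ => (1 : ℝ)) - (∑ i, w i) • 1 :=
  weighted_hitting_times_matrix_equation_general n A hsymm d hd hdpos w L hL H hHstep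
end

section
/- The solution H with zero diagonal entries to L H = w e^T - |w| I is given by H_{ij} = |w| (e_j - e_i)^T L^+ (e_j - \pi), where \pi = w/|w| and L^+ is the pseudo-inverse of L. -/
open Matrix

/-!
Column `j` of `H` solves `L h = w - |w| eⱼ = -|w| (eⱼ - π)`, whose right-hand side sums to zero.
Connectivity makes `ker L` the constants (the quadratic form of `L` is `½ ∑ Aᵢₖ (xᵢ - xₖ)²`),
so `L L⁺`, the orthogonal projection onto `range L = (ker L)ᗮ`, fixes every vector summing to zero.
Hence `h - L⁺ y` lies in `ker L` and is constant, and `Hⱼⱼ = 0` pins the constant down: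
`Hᵢⱼ = (L⁺ y)ᵢ - (L⁺ y)ⱼ`.
-/

namespace Matrix

variable {ι R : Type*} [Fintype ι] [DecidableEq ι]

def laplacian [CommRing R] (A : Matrix ι ι R) : Matrix ι ι R :=
  diagonal (A *ᵥ 1) - A

section CommRing

variable [CommRing R] {A : Matrix ι ι R}

theorem laplacian_mulVec_one (A : Matrix ι ι R) : laplacian A *ᵥ 1 = 0 := by
  ext i
  simp [laplacian, sub_mulVec, mulVec_diagonal]

theorem IsSymm.laplacian (hA : A.IsSymm) : (laplacian A).IsSymm := by
  rw [Matrix.laplacian, IsSymm, transpose_sub, diagonal_transpose, hA.eq]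

theorem one_vecMul_laplacian (hA : A.IsSymm) : 1 ᵥ* laplacian A = 0 := by
  rw [← mulVec_transpose, hA.laplacian.eq, laplacian_mulVec_one]

theorem two_mul_dotProduct_laplacian_mulVec (hA : A.IsSymm) (x : ι → R) :
    2 * (x ⬝ᵥ laplacian A *ᵥ x) = ∑ i, ∑ k, A i k * (x i - x k) ^ 2 := by
  have hform : x ⬝ᵥ laplacian A *ᵥ x = ∑ i, ∑ k, (A i k * x i ^ 2 - A i k * (x i * x k)) := by
    rw [laplacian, sub_mulVec, dotProduct_sub]
    simp only [dotProduct, mulVec_diagonal]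
    simp only [mulVec, dotProduct, Pi.one_apply, mul_one, Finset.sum_mul, Finset.mul_sum,
      ← Finset.sum_sub_distrib]
    exact Finset.sum_congr rfl fun i _ => Finset.sum_congr rfl fun k _ => by ring
  have hswap : ∑ i, ∑ k, (A i k * x k ^ 2 - A i k * (x i * x k)) = x ⬝ᵥ laplacian A *ᵥ x := by
    rw [hform, Finset.sum_comm]
    refine Finset.sum_congr rfl fun i _ => Finset.sum_congr rfl fun k _ => ?_
    rw [hA.apply]
    ring
  calc 2 * (x ⬝ᵥ laplacian A *ᵥ x)
      = ∑ i, ∑ k, ((A i k * x i ^ 2 - A i k * (x i * x k))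
          + (A i k * x k ^ 2 - A i k * (x i * x k))) := by
        simp only [Finset.sum_add_distrib, hswap, ← hform, two_mul]
    _ = ∑ i, ∑ k, A i k * (x i - x k) ^ 2 :=
        Finset.sum_congr rfl fun i _ => Finset.sum_congr rfl fun k _ => by ring

end CommRing

section Ordered

variable [CommRing R] [LinearOrder R] [IsStrictOrderedRing R] {A : Matrix ι ι R}

theorem eq_of_laplacian_mulVec_eq_zero_of_pos (hA : A.IsSymm) (hnonneg : ∀ i j, 0 ≤ A i j)
    {x : ι → R} (hx : laplacian A *ᵥ x = 0) {i k : ι} (hik : 0 < A i k) : x i = x k := by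
  have hterm_nonneg : ∀ i k, 0 ≤ A i k * (x i - x k) ^ 2 :=
    fun i k => mul_nonneg (hnonneg i k) (sq_nonneg _)
  have hsum : ∑ i, ∑ k, A i k * (x i - x k) ^ 2 = 0 := by
    rw [← two_mul_dotProduct_laplacian_mulVec hA, hx, dotProduct_zero, mul_zero]
  have hrow := (Finset.sum_eq_zero_iff_of_nonneg fun i _ =>
    Finset.sum_nonneg fun k _ => hterm_nonneg i k).mp hsum i (Finset.mem_univ i)
  have hterm := (Finset.sum_eq_zero_iff_of_nonneg fun k _ => hterm_nonneg i k).mp hrow k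
    (Finset.mem_univ k)
  have hsq : (x i - x k) ^ 2 = 0 := (mul_eq_zero.mp hterm).resolve_left hik.ne'
  exact sub_eq_zero.mp (pow_eq_zero_iff two_ne_zero |>.mp hsq)

theorem eq_of_laplacian_mulVec_eq_zero (hA : A.IsSymm) (hnonneg : ∀ i j, 0 ≤ A i j)
    (hconn : ∀ i j : ι, Relation.ReflTransGen (fun a b => 0 < A a b) i j)
    {x : ι → R} (hx : laplacian A *ᵥ x = 0) (i j : ι) : x i = x j := by
  induction hconn i j with
  | refl => rfl
  | tail _ hab ih => exact ih.trans (eq_of_laplacian_mulVec_eq_zero_of_pos hA hnonneg hx hab)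

end Ordered

end Matrix

theorem eq_zero_of_forall_eq_of_sum_eq_zero {ι R : Type*} [Fintype ι] [Semiring R]
    [NoZeroDivisors R] [CharZero R]
    {z : ι → R} (hconst : ∀ a b, z a = z b) (hsum : ∑ k, z k = 0) : z = 0 := by
  funext a
  have : Nonempty ι := ⟨a⟩
  rw [Finset.sum_congr rfl fun k _ => hconst k a, Finset.sum_const, Finset.card_univ,
    nsmul_eq_mul] at hsum
  exact (mul_eq_zero.mp hsum).resolve_left (Nat.cast_ne_zero.mpr Fintype.card_ne_zero)

theorem IsMoorePenroseInverse.mulVec_mulVec_eq_self {n : ℕ} {L P : Matrix (Fin n) (Fin n) ℝ}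
    (hP : IsMoorePenroseInverse L P) (hL1 : 1 ᵥ* L = 0)
    (hker : ∀ z, z ᵥ* L = 0 → ∀ a b, z a = z b) {y : Fin n → ℝ} (hy : ∑ k, y k = 0) :
    L *ᵥ (P *ᵥ y) = y := by
  have hleft : (L *ᵥ (P *ᵥ y)) ᵥ* L = y ᵥ* L := by
    rw [mulVec_mulVec, ← vecMul_transpose, vecMul_vecMul, hP.2.2.1, hP.1]
  have hsum : ∑ k, (y - L *ᵥ (P *ᵥ y)) k = 0 := by
    rw [← one_dotProduct, dotProduct_sub, dotProduct_mulVec, hL1, zero_dotProduct, one_dotProduct,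
      hy, sub_zero]
  have hzero := eq_zero_of_forall_eq_of_sum_eq_zero
    (hker _ (by rw [sub_vecMul, hleft, sub_self])) hsum
  exact (sub_eq_zero.mp hzero).symm

theorem weighted_hitting_times_formula_general
    (n : ℕ) (A : Matrix (Fin n) (Fin n) ℝ)
    (hsymm : A.IsSymm) (hnonneg : ∀ i j, 0 ≤ A i j)
    (hconn : ∀ i j : Fin n, Relation.ReflTransGen (fun a b => 0 < A a b) i j)
    (w : Fin n → ℝ) (hw : ∀ i, 0 < w i)
    (π : Fin n → ℝ) (hπ : π = fun i => w i / ∑ k, w k)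
    (L : Matrix (Fin n) (Fin n) ℝ)
    (hL : L = Matrix.diagonal (A.mulVec 1) - A)
    (Lp : Matrix (Fin n) (Fin n) ℝ) (hLp : IsMoorePenroseInverse L Lp)
    (H : Matrix (Fin n) (Fin n) ℝ)
    (hHdiag : ∀ i, H i i = 0)
    (hH : L * H = Matrix.vecMulVec w (fun _ => (1 : ℝ)) - (∑ i, w i) • 1) :
    ∀ i j, H i j =
      (∑ k, w k) * ((Pi.single j 1 - Pi.single i 1) ⬝ᵥ Lp.mulVec (Pi.single j 1 - π)) := by
  intro i j
  set s := ∑ k, w k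
  have hs : s ≠ 0 := (Finset.sum_pos (fun k _ => hw k) ⟨i, Finset.mem_univ i⟩).ne'
  change L = laplacian A at hL
  subst hL
  have hker : ∀ x, laplacian A *ᵥ x = 0 → ∀ a b, x a = x b :=
    fun x hx => eq_of_laplacian_mulVec_eq_zero hsymm hnonneg hconn hx
  have hπsum : ∑ k, π k = 1 := by rw [hπ, ← Finset.sum_div, div_self hs]
  set y := -s • (Pi.single j 1 - π)
  have hy : ∑ k, y k = 0 := by
    simp [y, ← Finset.mul_sum, Finset.sum_sub_distrib, hπsum]
  have hcol : laplacian A *ᵥ H.col j = y := by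
    have := congrArg (· *ᵥ Pi.single j (1 : ℝ)) hH
    rw [← mulVec_mulVec, mulVec_single_one, sub_mulVec, vecMulVec_mulVec, smul_mulVec, one_mulVec,
      dotProduct_single_one, MulOpposite.op_one, one_smul] at this
    rw [this]
    ext k
    simp only [y, hπ, Pi.sub_apply, Pi.smul_apply, smul_eq_mul]
    field_simp
    ring
  have hsol : laplacian A *ᵥ (Lp *ᵥ y) = y :=
    hLp.mulVec_mulVec_eq_self (one_vecMul_laplacian hsymm)
      (fun z hz => hker z (by rwa [← vecMul_transpose, hsymm.laplacian.eq])) hy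
  have hconst := hker (H.col j - Lp *ᵥ y) (by rw [mulVec_sub, hcol, hsol, sub_self]) i j
  simp only [y, Pi.sub_apply, col_apply, hHdiag, mulVec_smul, Pi.smul_apply, smul_eq_mul] at hconst
  rw [sub_dotProduct, single_one_dotProduct, single_one_dotProduct]
  linarith

theorem weighted_hitting_times_formula
    (n : ℕ) (A : Matrix (Fin n) (Fin n) ℝ)
    (hsymm : A.IsSymm) (hnonneg : ∀ i j, 0 ≤ A i j) (hdiag : ∀ i, A i i = 0)
    (hconn : ∀ i j : Fin n, Relation.ReflTransGen (fun a b => 0 < A a b) i j)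
    (w : Fin n → ℝ) (hw : ∀ i, 0 < w i)
    (π : Fin n → ℝ) (hπ : π = fun i => w i / ∑ k, w k)
    (L : Matrix (Fin n) (Fin n) ℝ)
    (hL : L = Matrix.diagonal (A.mulVec 1) - A)
    (Lp : Matrix (Fin n) (Fin n) ℝ) (hLp : IsMoorePenroseInverse L Lp)
    (H : Matrix (Fin n) (Fin n) ℝ)
    (hHdiag : ∀ i, H i i = 0)
    (hH : L * H = Matrix.vecMulVec w (fun _ => (1 : ℝ)) - (∑ i, w i) • 1) :
    ∀ i j, H i j =
      (∑ k, w k) * ((Pi.single j 1 - Pi.single i 1) ⬝ᵥ Lp.mulVec (Pi.single j 1 - π)) :=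
  weighted_hitting_times_formula_general n A hsymm hnonneg hconn w hw π hπ L hL Lp hLp H hHdiag hH
end
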